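/- arXiv:1805.08622 — 7 statements merged into one kernel-verified Lean document; each statement's English description precedes it below -/
import Mathlib

section
/- For any c ∈ [0,1] and probability measures P, Q on a finite set, the c-primitive f-divergence satisfies I_{f_c}(P,Q) = (1/2)·d_TV(cP, c̄Q) − (1/2)·|1−2c|, where f_c(t) = min(c̄,c) − min(c̄, ct), c̄ = 1−c, d_TV(μ,ν) = Σ|μ(x)−ν(x)|, and I_{f_c}(P,Q) = Σ_x Q(x)·f_c(P(x)/Q(x)) (with Q strictly positive). -/
open Finset

lemma min_half_abs (a b : ℝ) : min a b = (a + b - |a - b|) / 2 := by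
  rcases le_total a b with h | h
  · rw [min_eq_left h, abs_of_nonpos (by linarith)]; ring
  · rw [min_eq_right h, abs_of_nonneg (by linarith)]; ring

theorem c_primitive_f_divergence_eq_tv
    {X : Type*} [Fintype X] (c : ℝ) (hc0 : 0 ≤ c) (hc1 : c ≤ 1)
    (P Q : X → ℝ) (hP0 : ∀ x, 0 ≤ P x) (hP1 : ∑ x, P x = 1)
    (hQ0 : ∀ x, 0 < Q x) (hQ1 : ∑ x, Q x = 1) :
    ∑ x, Q x * (min (1 - c) c - min (1 - c) (c * (P x / Q x)))
      = (1 / 2) * (∑ x, |c * P x - (1 - c) * Q x|) - (1 / 2) * |1 - 2 * c| := by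
  have key : ∀ x, Q x * (min (1 - c) c - min (1 - c) (c * (P x / Q x)))
      = min (1 - c) c * Q x
        - (((1 - c) * Q x + c * P x) - |c * P x - (1 - c) * Q x|) / 2 := by
    intro x
    have hq := (hQ0 x).ne'
    have h1 : Q x * min (1 - c) (c * (P x / Q x)) = min ((1 - c) * Q x) (c * P x) := by
      rw [mul_min_of_nonneg _ _ (hQ0 x).le]
      congr 1
      · ring
      · rw [mul_comm, mul_assoc, div_mul_cancel₀ _ hq]
    have h2 := min_half_abs ((1 - c) * Q x) (c * P x)
    have habs : |(1 - c) * Q x - c * P x| = |c * P x - (1 - c) * Q x| := abs_sub_comm _ _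
    rw [mul_sub, h1, h2, habs]; ring
  rw [Finset.sum_congr rfl (fun x _ => key x), Finset.sum_sub_distrib,
    ← Finset.mul_sum, hQ1, ← Finset.sum_div, Finset.sum_sub_distrib,
    Finset.sum_add_distrib, ← Finset.mul_sum, ← Finset.mul_sum, hQ1, hP1]
  have hmin : min (1 - c) c = (1 - |1 - 2 * c|) / 2 := by
    rw [min_half_abs]
    have : |1 - c - c| = |1 - 2 * c| := by ring_nf
    rw [this]; ring
  rw [hmin]; ring
end

section
/- For all c ∈ [0,1] and h ∈ [0, min(c, 1−c)], we have 1 − √(c² − h²) − √((1−c)² − h²) ≤ 2h²/min(c, 1−c). -/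
/-!
Each square root loses little against its radius: for `a > 0`,
`a - √(a² - h²) ≤ h² / a`, since `a² - a √(a² - h²) ≤ a² - (√(a² - h²))² ≤ h²`.
Write `1 = c + (1 - c)`, apply this with `a = c` and `a = 1 - c`, and bound both
`h² / c` and `h² / (1 - c)` by `h² / min c (1 - c)`.
-/

namespace Real

theorem sub_sqrt_sq_sub_sq_le {a : ℝ} (ha : 0 < a) (h : ℝ) :
    a - √(a ^ 2 - h ^ 2) ≤ h ^ 2 / a := by
  set s := √(a ^ 2 - h ^ 2)
  have hs0 : 0 ≤ s := sqrt_nonneg _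
  have hsa : s ≤ a := (sqrt_le_left ha.le).2 (by nlinarith)
  have hs_sq : a ^ 2 - h ^ 2 ≤ s ^ 2 := sq_sqrt' (x := a ^ 2 - h ^ 2) ▸ le_max_left _ _
  rw [le_div_iff₀ ha]
  nlinarith [mul_le_mul_of_nonneg_left hsa hs0]

theorem sub_sqrt_sq_sub_sq_le_of_le {a h m : ℝ} (hma : m ≤ a) (hh0 : 0 ≤ h) (hhm : h ≤ m) :
    a - √(a ^ 2 - h ^ 2) ≤ h ^ 2 / m := by
  rcases (hh0.trans hhm).eq_or_lt with rfl | hm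
  · obtain rfl : h = 0 := le_antisymm hhm hh0
    simp [sqrt_sq hma]
  calc a - √(a ^ 2 - h ^ 2) ≤ h ^ 2 / a := sub_sqrt_sq_sub_sq_le (hm.trans_le hma) h
    _ ≤ h ^ 2 / m := by gcongr

end Real

theorem one_sub_sqrt_sub_sqrt_le_general
    (c h : ℝ)
    (hh0 : 0 ≤ h) (hh : h ≤ min c (1 - c)) :
    1 - Real.sqrt (c ^ 2 - h ^ 2) - Real.sqrt ((1 - c) ^ 2 - h ^ 2)
      ≤ 2 * h ^ 2 / min c (1 - c) := by
  have hc := Real.sub_sqrt_sq_sub_sq_le_of_le (min_le_left c (1 - c)) hh0 hh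
  have hc' := Real.sub_sqrt_sq_sub_sq_le_of_le (min_le_right c (1 - c)) hh0 hh
  calc 1 - Real.sqrt (c ^ 2 - h ^ 2) - Real.sqrt ((1 - c) ^ 2 - h ^ 2)
      = (c - Real.sqrt (c ^ 2 - h ^ 2)) + ((1 - c) - Real.sqrt ((1 - c) ^ 2 - h ^ 2)) := by ring
    _ ≤ h ^ 2 / min c (1 - c) + h ^ 2 / min c (1 - c) := add_le_add hc hc'
    _ = 2 * h ^ 2 / min c (1 - c) := by ring

theorem one_sub_sqrt_sub_sqrt_le
    (c h : ℝ) (hc0 : 0 ≤ c) (hc1 : c ≤ 1)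
    (hh0 : 0 ≤ h) (hh : h ≤ min c (1 - c)) :
    1 - Real.sqrt (c ^ 2 - h ^ 2) - Real.sqrt ((1 - c) ^ 2 - h ^ 2)
      ≤ 2 * h ^ 2 / min c (1 - c) :=
  one_sub_sqrt_sub_sqrt_le_general c h hh0 hh
end

section
/- Key inequality underlying Le Cam's method: for any c ∈ (0,1), probability mass functions P, Q on a finite set O, a pseudometric ρ on Θ, parameters θ ≠ θ' in Θ, and any estimator θ̂ : O → Θ, c·E_{o∼P}[ρ(θ, θ̂(o))] + c̄·E_{o∼Q}[ρ(θ', θ̂(o))] ≥ ρ(θ,θ')·Σ_o min(c·P(o), c̄·Q(o)). -/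
open Finset

theorem le_cam_key_inequality
    {Θ O : Type*} [Fintype O]
    (ρ : Θ → Θ → ℝ) (hρ0 : ∀ θ θ', 0 ≤ ρ θ θ')
    (hρsymm : ∀ θ θ', ρ θ θ' = ρ θ' θ)
    (hρtri : ∀ θ₁ θ₂ θ₃, ρ θ₁ θ₃ ≤ ρ θ₁ θ₂ + ρ θ₂ θ₃)
    (hρrefl : ∀ θ, ρ θ θ = 0)
    (P Q : O → ℝ) (hP0 : ∀ o, 0 ≤ P o) (hQ0 : ∀ o, 0 ≤ Q o)
    (hP1 : ∑ o, P o = 1) (hQ1 : ∑ o, Q o = 1)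
    (c : ℝ) (hc0 : 0 < c) (hc1 : c < 1)
    (θ θ' : Θ) (hne : θ ≠ θ') (est : O → Θ) :
    c * (∑ o, P o * ρ θ (est o)) + (1 - c) * (∑ o, Q o * ρ θ' (est o))
      ≥ ρ θ θ' * ∑ o, min (c * P o) ((1 - c) * Q o) := by
  rw [ge_iff_le, Finset.mul_sum, Finset.mul_sum, Finset.mul_sum, ← Finset.sum_add_distrib]
  apply Finset.sum_le_sum
  intro o _
  have hm : 0 ≤ min (c * P o) ((1 - c) * Q o) :=
    le_min (mul_nonneg hc0.le (hP0 o)) (mul_nonneg (by linarith) (hQ0 o))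
  have htri : ρ θ θ' ≤ ρ θ (est o) + ρ θ' (est o) := by
    have := hρtri θ (est o) θ'
    rw [hρsymm (est o) θ'] at this
    linarith
  calc ρ θ θ' * min (c * P o) ((1 - c) * Q o)
      ≤ (ρ θ (est o) + ρ θ' (est o)) * min (c * P o) ((1 - c) * Q o) := by
        exact mul_le_mul_of_nonneg_right htri hm
    _ = ρ θ (est o) * min (c * P o) ((1 - c) * Q o)
        + ρ θ' (est o) * min (c * P o) ((1 - c) * Q o) := by ring
    _ ≤ c * (P o * ρ θ (est o)) + (1 - c) * (Q o * ρ θ' (est o)) := by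
        have h1 : ρ θ (est o) * min (c * P o) ((1 - c) * Q o) ≤ c * (P o * ρ θ (est o)) := by
          rw [show c * (P o * ρ θ (est o)) = ρ θ (est o) * (c * P o) by ring]
          exact mul_le_mul_of_nonneg_left (min_le_left _ _) (hρ0 _ _)
        have h2 : ρ θ' (est o) * min (c * P o) ((1 - c) * Q o) ≤ (1 - c) * (Q o * ρ θ' (est o)) := by
          rw [show (1 - c) * (Q o * ρ θ' (est o)) = ρ θ' (est o) * ((1 - c) * Q o) by ring]
          exact mul_le_mul_of_nonneg_left (min_le_right _ _) (hρ0 _ _)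
        linarith
end

section
/- For the Dobrushin-type bound: for any c ∈ [0,1] and any Markov kernel (column-stochastic matrix) T from finite set X to finite set Y, I_{f_c}(T∘P, T∘Q) ≤ ϑ_c(T)·I_{f_c}(P,Q) for all probability mass functions P, Q on X, where ϑ_c(T) := (1/min(c,c̄))·max_{x,x'∈X} I_{f_c}(T(x), T(x')) for c ∈ (0,1), and I_{f_c}(P,Q) = (1/2)(d_TV(cP, c̄Q) − |2c−1|). -/
open Finset

/-- The `c`-primitive `f`-divergence between two probability mass functions on a finite set,
expressed via total variation: `I_{f_c}(P,Q) = (1/2)(d_TV(cP, (1-c)Q) - |2c-1|)`. -/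
noncomputable def Ifc {Z : Type*} [Fintype Z] (c : ℝ) (P Q : Z → ℝ) : ℝ :=
  (1 / 2) * ((∑ z, |c * P z - (1 - c) * Q z|) - |2 * c - 1|)

/-- The generalized Dobrushin coefficient of a Markov kernel `T : X ⇝ Y`. -/
noncomputable def genDobrushin {X Y : Type*} [Fintype X] [Fintype Y] [Nonempty X]
    (c : ℝ) (T : X → Y → ℝ) : ℝ :=
  (1 / min c (1 - c)) *
    (Finset.univ.sup' Finset.univ_nonempty (fun p : X × X => Ifc c (T p.1) (T p.2)))
/-! For `c ≤ 1/2` the divergence `I_c(P, Q)` is the positive mass `∑ A⁺` of the signed measure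
`A = cP - (1-c)Q`, whose total mass is `2c - 1 ≤ 0`. If `S` is the set where `T A` is positive and
`g x = T(S | x)`, then `I_c(TP, TQ) = ∑ A g`. With `a = g x₀ = max g` and `b = g x₁ = min g` this is
at most `(a - b) ∑ A⁺ + b (2c - 1)`, while `c a - (1-c) b ≤ I_c(T x₀, T x₁)`; as `∑ A⁺ ≤ c`, the two
bounds combine to `c · I_c(TP, TQ) ≤ (max I_c(T x, T x')) · I_c(P, Q)`. The case `c ≥ 1/2` reduces
to this one by the symmetry `I_{1-c}(Q, P) = I_c(P, Q)`. -/

section Ifc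

variable {Z : Type*} [Fintype Z]

lemma Ifc_swap (c : ℝ) (P Q : Z → ℝ) : Ifc (1 - c) Q P = Ifc c P Q := by
  have h : |2 * (1 - c) - 1| = |2 * c - 1| := by rw [← abs_neg]; ring_nf
  simp only [Ifc, h, sub_sub_cancel]
  congr 3
  exact funext fun z => abs_sub_comm _ _

lemma sum_abs_eq_two_mul_sum_posPart_sub (f : Z → ℝ) :
    ∑ z, |f z| = 2 * ∑ z, (f z)⁺ - ∑ z, f z := by
  rw [mul_sum, ← sum_sub_distrib]
  refine sum_congr rfl fun z _ => ?_
  linarith [posPart_sub_negPart (f z), posPart_add_negPart (f z)]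

lemma sum_le_sum_posPart (f : Z → ℝ) (S : Finset Z) : ∑ z ∈ S, f z ≤ ∑ z, (f z)⁺ :=
  calc ∑ z ∈ S, f z ≤ ∑ z ∈ S, (f z)⁺ := sum_le_sum fun z _ => le_posPart (f z)
    _ ≤ ∑ z, (f z)⁺ := sum_le_sum_of_subset_of_nonneg (subset_univ S)
        fun z _ _ => posPart_nonneg (f z)

lemma sum_posPart_eq_sum_filter_pos (f : Z → ℝ) :
    ∑ z, (f z)⁺ = ∑ z with 0 < f z, f z := by
  rw [sum_filter]
  exact sum_congr rfl fun z _ => posPart_eq_ite_lt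

lemma sum_mul_le_of_le_of_le {A g : Z → ℝ} {a b : ℝ} (hb : ∀ z, b ≤ g z)
    (ha : ∀ z, g z ≤ a) : ∑ z, A z * g z ≤ (a - b) * ∑ z, (A z)⁺ + b * ∑ z, A z := by
  rw [mul_sum, mul_sum, ← sum_add_distrib]
  refine sum_le_sum fun z _ => ?_
  calc A z * g z = A z * (g z - b) + b * A z := by ring
    _ ≤ (A z)⁺ * (g z - b) + b * A z := by
        have := mul_le_mul_of_nonneg_right (le_posPart (A z)) (sub_nonneg.2 (hb z))
        linarith
    _ ≤ (a - b) * (A z)⁺ + b * A z := by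
        have := mul_le_mul_of_nonneg_left (sub_le_sub_right (ha z) b) (posPart_nonneg (A z))
        linarith

variable {P Q : Z → ℝ}

lemma sum_mul_sub_mul_eq (c : ℝ) (hP1 : ∑ z, P z = 1) (hQ1 : ∑ z, Q z = 1) :
    ∑ z, (c * P z - (1 - c) * Q z) = 2 * c - 1 := by
  rw [sum_sub_distrib, ← mul_sum, ← mul_sum, hP1, hQ1]; ring

variable {c : ℝ}

lemma Ifc_eq_sum_posPart (hc : c ≤ 1 / 2) (hP1 : ∑ z, P z = 1) (hQ1 : ∑ z, Q z = 1) :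
    Ifc c P Q = ∑ z, (c * P z - (1 - c) * Q z)⁺ := by
  have habs : |2 * c - 1| = 1 - 2 * c := by rw [abs_of_nonpos (by linarith)]; ring
  rw [Ifc, sum_abs_eq_two_mul_sum_posPart_sub, sum_mul_sub_mul_eq c hP1 hQ1, habs]
  ring

lemma mul_sum_sub_mul_sum_le_Ifc (hc : c ≤ 1 / 2) (hP1 : ∑ z, P z = 1)
    (hQ1 : ∑ z, Q z = 1) (S : Finset Z) :
    c * ∑ z ∈ S, P z - (1 - c) * ∑ z ∈ S, Q z ≤ Ifc c P Q := by
  rw [Ifc_eq_sum_posPart hc hP1 hQ1, mul_sum, mul_sum, ← sum_sub_distrib]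
  exact sum_le_sum_posPart _ S

lemma sum_posPart_mul_sub_mul_le (hc0 : 0 ≤ c) (hc1 : c ≤ 1) (hP0 : ∀ z, 0 ≤ P z)
    (hQ0 : ∀ z, 0 ≤ Q z) (hP1 : ∑ z, P z = 1) :
    ∑ z, (c * P z - (1 - c) * Q z)⁺ ≤ c := by
  calc ∑ z, (c * P z - (1 - c) * Q z)⁺ ≤ ∑ z, c * P z := by
        refine sum_le_sum fun z _ => sup_le ?_ ?_
        · nlinarith [hQ0 z]
        · exact mul_nonneg hc0 (hP0 z)
    _ = c := by rw [← mul_sum, hP1, mul_one]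

end Ifc

section Kernel

variable {X Y : Type*} [Fintype X] {T : X → Y → ℝ}

lemma mul_sum_sub_mul_sum_eq (c : ℝ) (P Q : X → ℝ) (y : Y) :
    c * ∑ x, T x y * P x - (1 - c) * ∑ x, T x y * Q x
      = ∑ x, T x y * (c * P x - (1 - c) * Q x) := by
  rw [mul_sum, mul_sum, ← sum_sub_distrib]
  exact sum_congr rfl fun x _ => by ring

variable [Fintype Y]

lemma sum_sum_mul_eq_one (hT1 : ∀ x, ∑ y, T x y = 1) {P : X → ℝ} (hP1 : ∑ x, P x = 1) :
    ∑ y, ∑ x, T x y * P x = 1 := by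
  rw [sum_comm]
  simp only [← sum_mul, hT1, one_mul, hP1]

theorem mul_Ifc_comp_le [Nonempty X] (hT0 : ∀ x y, 0 ≤ T x y) (hT1 : ∀ x, ∑ y, T x y = 1)
    {c : ℝ} (hc0 : 0 ≤ c) (hc : c ≤ 1 / 2) {P Q : X → ℝ} (hP0 : ∀ x, 0 ≤ P x)
    (hQ0 : ∀ x, 0 ≤ Q x) (hP1 : ∑ x, P x = 1) (hQ1 : ∑ x, Q x = 1) {K : ℝ}
    (hK : ∀ x x', Ifc c (T x) (T x') ≤ K) :
    c * Ifc c (fun y => ∑ x, T x y * P x) (fun y => ∑ x, T x y * Q x) ≤ K * Ifc c P Q := by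
  set A : X → ℝ := fun x => c * P x - (1 - c) * Q x
  set g : X → ℝ := fun x => ∑ y with 0 < ∑ x, T x y * A x, T x y
  obtain ⟨x₀, hx₀⟩ := Finite.exists_max g
  obtain ⟨x₁, hx₁⟩ := Finite.exists_min g
  have hout : Ifc c (fun y => ∑ x, T x y * P x) (fun y => ∑ x, T x y * Q x)
      = ∑ x, A x * g x := by
    rw [Ifc_eq_sum_posPart hc (sum_sum_mul_eq_one hT1 hP1) (sum_sum_mul_eq_one hT1 hQ1)]
    simp only [mul_sum_sub_mul_sum_eq]
    rw [sum_posPart_eq_sum_filter_pos, sum_comm]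
    exact sum_congr rfl fun x _ => by rw [← sum_mul, mul_comm]
  have hin : Ifc c P Q = ∑ x, (A x)⁺ := Ifc_eq_sum_posPart hc hP1 hQ1
  have hpair : c * g x₀ - (1 - c) * g x₁ ≤ K :=
    (mul_sum_sub_mul_sum_le_Ifc hc (hT1 x₀) (hT1 x₁) _).trans (hK x₀ x₁)
  have hspread : ∑ x, A x * g x ≤ (g x₀ - g x₁) * ∑ x, (A x)⁺ + g x₁ * (2 * c - 1) := by
    rw [← sum_mul_sub_mul_eq c hP1 hQ1]
    exact sum_mul_le_of_le_of_le hx₁ hx₀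
  have hmass : ∑ x, (A x)⁺ ≤ c := sum_posPart_mul_sub_mul_le hc0 (by linarith) hP0 hQ0 hP1
  have hg0 : 0 ≤ g x₁ := sum_nonneg fun y _ => hT0 x₁ y
  have hsp0 : 0 ≤ ∑ x, (A x)⁺ := sum_nonneg fun x _ => posPart_nonneg _
  rw [hout, hin]
  calc c * ∑ x, A x * g x
      ≤ c * ((g x₀ - g x₁) * ∑ x, (A x)⁺ + g x₁ * (2 * c - 1)) := by gcongr
    _ ≤ (c * g x₀ - (1 - c) * g x₁) * ∑ x, (A x)⁺ := by
        linarith [mul_nonneg (mul_nonneg (by linarith : 0 ≤ 1 - 2 * c) hg0) (sub_nonneg.2 hmass)]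
    _ ≤ K * ∑ x, (A x)⁺ := by gcongr

end Kernel

theorem sdpi_c_primitive
    {X Y : Type*} [Fintype X] [Fintype Y] [Nonempty X]
    (T : X → Y → ℝ) (hT0 : ∀ x y, 0 ≤ T x y) (hT1 : ∀ x, ∑ y, T x y = 1)
    (c : ℝ) (hc0 : 0 < c) (hc1 : c < 1)
    (P Q : X → ℝ) (hP0 : ∀ x, 0 ≤ P x) (hQ0 : ∀ x, 0 ≤ Q x)
    (hP1 : ∑ x, P x = 1) (hQ1 : ∑ x, Q x = 1) :
    Ifc c (fun y => ∑ x, T x y * P x) (fun y => ∑ x, T x y * Q x)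
      ≤ genDobrushin c T * Ifc c P Q := by
  rw [genDobrushin, one_div, mul_assoc, le_inv_mul_iff₀ (lt_min hc0 (by linarith))]
  set K := univ.sup' univ_nonempty (fun p : X × X => Ifc c (T p.1) (T p.2))
  have hK : ∀ x x', Ifc c (T x) (T x') ≤ K := fun x x' =>
    le_sup' (fun p : X × X => Ifc c (T p.1) (T p.2)) (mem_univ (x, x'))
  rcases le_total c (1 / 2) with hc | hc
  · rw [min_eq_left (by linarith)]
    exact mul_Ifc_comp_le hT0 hT1 hc0.le hc hP0 hQ0 hP1 hQ1 hK
  · rw [min_eq_right (by linarith), ← Ifc_swap c P Q,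
      ← Ifc_swap c (fun y => ∑ x, T x y * P x)]
    refine mul_Ifc_comp_le hT0 hT1 (by linarith) (by linarith) hQ0 hP0 hQ1 hP1 fun x x' => ?_
    rw [Ifc_swap]
    exact hK x' x
end

section
/- Let f : (0,∞) → ℝ be convex with f(1) = 0 and f(x) = x·f(1/x). Define F_f(e) := e·f((1−e)/e) for e ∈ (0,1). Then F_f is nonnegative, convex on (0,1), symmetric about 1/2 (F_f(1/2 + ε) = F_f(1/2 − ε) for |ε| < 1/2), and F_f(1/2) = 0. -/
/-!
`F` is the perspective `(x, t) ↦ t f(x / t)` of `f` restricted to the line `x + t = 1`, so it is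
convex. The identity `f x = x f(1 / x)` says exactly that `F (1 - e) = F e`, and a convex function
that is symmetric about `1 / 2` is minimal there, where `F (1 / 2) = f 1 / 2 = 0`.
-/

open Set

section Perspective

variable {E : Type*} [AddCommGroup E] [Module ℝ E]

lemma inv_smul_add_smul_eq_weighted (x y : E) {t u a b : ℝ} (ht : t ≠ 0) (hu : u ≠ 0)
    (hw : a * t + b * u ≠ 0) :
    (a * t + b * u)⁻¹ • (a • x + b • y) =
      (a * t / (a * t + b * u)) • (t⁻¹ • x) + (b * u / (a * t + b * u)) • (u⁻¹ • y) := by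
  simp only [smul_add, smul_smul]
  congr 2 <;> field_simp

lemma ConvexOn.perspective_combination_le {s : Set E} {f : E → ℝ} (hf : ConvexOn ℝ s f)
    {x y : E} {t u a b : ℝ} (ht : 0 < t) (hu : 0 < u) (hx : t⁻¹ • x ∈ s) (hy : u⁻¹ • y ∈ s)
    (ha : 0 ≤ a) (hb : 0 ≤ b) (hab : a + b = 1) :
    (a * t + b * u)⁻¹ • (a • x + b • y) ∈ s ∧
      (a * t + b * u) * f ((a * t + b * u)⁻¹ • (a • x + b • y)) ≤
        a * (t * f (t⁻¹ • x)) + b * (u * f (u⁻¹ • y)) := by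
  have hw : 0 < a * t + b * u := convex_Ioi (0 : ℝ) ht hu ha hb hab
  have hweights : a * t / (a * t + b * u) + b * u / (a * t + b * u) = 1 := by
    field_simp
  have hat : 0 ≤ a * t / (a * t + b * u) := by positivity
  have hbu : 0 ≤ b * u / (a * t + b * u) := by positivity
  rw [inv_smul_add_smul_eq_weighted x y ht.ne' hu.ne' hw.ne']
  refine ⟨hf.1 hx hy hat hbu hweights, ?_⟩
  calc (a * t + b * u) * f ((a * t / (a * t + b * u)) • (t⁻¹ • x) +
          (b * u / (a * t + b * u)) • (u⁻¹ • y))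
      ≤ (a * t + b * u) * ((a * t / (a * t + b * u)) • f (t⁻¹ • x) +
          (b * u / (a * t + b * u)) • f (u⁻¹ • y)) :=
        mul_le_mul_of_nonneg_left (hf.2 hx hy hat hbu hweights) hw.le
    _ = a * (t * f (t⁻¹ • x)) + b * (u * f (u⁻¹ • y)) := by
        simp only [smul_eq_mul]; field_simp

lemma ConvexOn.perspective {s : Set E} {f : E → ℝ} (hf : ConvexOn ℝ s f) :
    ConvexOn ℝ {p : E × ℝ | 0 < p.2 ∧ p.2⁻¹ • p.1 ∈ s} (fun p ↦ p.2 * f (p.2⁻¹ • p.1)) := by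
  refine ⟨?_, ?_⟩
  · rintro ⟨x, t⟩ ⟨ht, hx⟩ ⟨y, u⟩ ⟨hu, hy⟩ a b ha hb hab
    exact ⟨convex_Ioi (0 : ℝ) ht hu ha hb hab,
      (hf.perspective_combination_le ht hu hx hy ha hb hab).1⟩
  · rintro ⟨x, t⟩ ⟨ht, hx⟩ ⟨y, u⟩ ⟨hu, hy⟩ a b ha hb hab
    exact (hf.perspective_combination_le ht hu hx hy ha hb hab).2

lemma ConvexOn.map_midpoint_le_of_map_eq {s : Set E} {f : E → ℝ} (hf : ConvexOn ℝ s f)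
    {x y : E} (hx : x ∈ s) (hy : y ∈ s) (hxy : f x = f y) : f (midpoint ℝ x y) ≤ f x := by
  calc f (midpoint ℝ x y) = f ((1 / 2 : ℝ) • x + (1 / 2 : ℝ) • y) := by
        rw [midpoint_eq_smul_add, smul_add, invOf_eq_inv, one_div]
    _ ≤ (1 / 2 : ℝ) • f x + (1 / 2 : ℝ) • f y := hf.2 hx hy (by norm_num) (by norm_num) (by norm_num)
    _ = f x := by rw [← hxy, smul_eq_mul]; ring

end Perspective

lemma ConvexOn.mul_comp_one_sub_div {f : ℝ → ℝ} (hf : ConvexOn ℝ (Ioi 0) f) :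
    ConvexOn ℝ (Ioo 0 1) (fun e ↦ e * f ((1 - e) / e)) := by
  have h := hf.perspective.comp_affineMap (AffineMap.lineMap ((1 : ℝ), (0 : ℝ)) (0, 1))
  refine (h.subset (fun e he ↦ ?_) (convex_Ioo 0 1)).congr (fun e _ ↦ ?_)
  · simp only [smul_eq_mul, mem_Ioi, preimage_ofPred_eq, AffineMap.lineMap_apply_module,
      Prod.smul_mk, mul_one, mul_zero, Prod.mk_add_mk, add_zero, zero_add, mem_ofPred_eq]
    exact ⟨he.1, mul_pos (inv_pos.2 he.1) (sub_pos.2 he.2)⟩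
  · simp [AffineMap.lineMap_apply_module, div_eq_inv_mul]

lemma mul_apply_div_one_sub_eq {f : ℝ → ℝ} (hf : ∀ x, 0 < x → f x = x * f (1 / x)) {e : ℝ}
    (he0 : 0 < e) (he1 : e < 1) : (1 - e) * f (e / (1 - e)) = e * f ((1 - e) / e) := by
  rw [hf _ (div_pos he0 (sub_pos.2 he1)), one_div_div, ← mul_assoc,
    mul_div_cancel₀ _ (sub_pos.2 he1).ne']

theorem Ff_convex_nonneg_symmetric
    (f : ℝ → ℝ) (hconv : ConvexOn ℝ (Set.Ioi 0) f) (hf1 : f 1 = 0)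
    (hdiamond : ∀ x : ℝ, 0 < x → f x = x * f (1 / x))
    (F : ℝ → ℝ) (hF : ∀ e : ℝ, F e = e * f ((1 - e) / e)) :
    (∀ e ∈ Set.Ioo (0:ℝ) 1, 0 ≤ F e) ∧
    ConvexOn ℝ (Set.Ioo (0:ℝ) 1) F ∧
    (∀ ε : ℝ, |ε| < 1 / 2 → F (1 / 2 + ε) = F (1 / 2 - ε)) ∧
    F (1 / 2) = 0 := by
  have hconvF : ConvexOn ℝ (Ioo 0 1) F := by
    simpa only [← hF] using hconv.mul_comp_one_sub_div
  have hsymm : ∀ e ∈ Ioo (0 : ℝ) 1, F (1 - e) = F e := fun e ⟨he0, he1⟩ ↦ by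
    rw [hF, hF, sub_sub_cancel]
    exact mul_apply_div_one_sub_eq hdiamond he0 he1
  have hhalf : F (1 / 2) = 0 := by norm_num [hF, hf1]
  refine ⟨fun e he ↦ ?_, hconvF, fun ε hε ↦ ?_, hhalf⟩
  · have h1e : 1 - e ∈ Ioo (0 : ℝ) 1 := ⟨by linarith [he.2], by linarith [he.1]⟩
    have hmid : midpoint ℝ e (1 - e) = 1 / 2 := by
      rw [midpoint_eq_smul_add]; norm_num
    calc 0 = F (midpoint ℝ e (1 - e)) := by rw [hmid, hhalf]
      _ ≤ F e := hconvF.map_midpoint_le_of_map_eq he h1e (hsymm e he).symm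
  · obtain ⟨hε₁, hε₂⟩ := abs_lt.mp hε
    have h := hsymm (1 / 2 - ε) ⟨by linarith, by linarith⟩
    rwa [show 1 - (1 / 2 - ε) = 1 / 2 + ε by ring] at h
end

section
/- Hypothesis-testing characterization of ε-local privacy (one direction): if a Markov kernel T from finite X to finite Z satisfies T(z|x_i) ≤ e^ε·T(z|x_j) for all z and all pairs x_i, x_j, then for every statistical test r : Z → {0,1} and every pair (x_i, x_j), the false negative rate FN := Σ_z T(z|x_i)𝟙{r(z)=0} and false positive rate FP := Σ_z T(z|x_j)𝟙{r(z)=1} satisfy FN + e^ε·FP ≥ 1 and e^ε·FN + FP ≥ 1. -/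
open Finset

theorem local_privacy_hypothesis_testing
    {X Z : Type*} [Fintype Z]
    (T : X → Z → ℝ) (hT0 : ∀ x z, 0 ≤ T x z) (hT1 : ∀ x, ∑ z, T x z = 1)
    (ε : ℝ) (hε : 0 < ε)
    (hpriv : ∀ (xi xj : X) (z : Z), T xi z ≤ Real.exp ε * T xj z) :
    ∀ (xi xj : X) (r : Z → Bool),
      (∑ z, T xi z * (if r z = false then (1:ℝ) else 0))
          + Real.exp ε * (∑ z, T xj z * (if r z = true then (1:ℝ) else 0)) ≥ 1 ∧
      Real.exp ε * (∑ z, T xi z * (if r z = false then (1:ℝ) else 0))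
          + (∑ z, T xj z * (if r z = true then (1:ℝ) else 0)) ≥ 1 := by
  intro xi xj r
  constructor
  · have h : ∀ z, T xi z * (if r z = false then (1:ℝ) else 0)
        + Real.exp ε * (T xj z * (if r z = true then (1:ℝ) else 0)) ≥ T xi z := by
      intro z
      cases hr : r z <;> simp [hr]
      simpa using hpriv xi xj z
    calc (1:ℝ) = ∑ z, T xi z := (hT1 xi).symm
      _ ≤ ∑ z, (T xi z * (if r z = false then (1:ℝ) else 0)
            + Real.exp ε * (T xj z * (if r z = true then (1:ℝ) else 0))) :=
          Finset.sum_le_sum fun z _ => h z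
      _ = (∑ z, T xi z * (if r z = false then (1:ℝ) else 0))
            + Real.exp ε * (∑ z, T xj z * (if r z = true then (1:ℝ) else 0)) := by
          rw [Finset.sum_add_distrib, Finset.mul_sum]
  · have h : ∀ z, Real.exp ε * (T xi z * (if r z = false then (1:ℝ) else 0))
        + T xj z * (if r z = true then (1:ℝ) else 0) ≥ T xj z := by
      intro z
      cases hr : r z <;> simp [hr]
      simpa using hpriv xj xi z
    calc (1:ℝ) = ∑ z, T xj z := (hT1 xj).symm
      _ ≤ ∑ z, (Real.exp ε * (T xi z * (if r z = false then (1:ℝ) else 0))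
            + T xj z * (if r z = true then (1:ℝ) else 0)) :=
          Finset.sum_le_sum fun z _ => h z
      _ = Real.exp ε * (∑ z, T xi z * (if r z = false then (1:ℝ) else 0))
            + (∑ z, T xj z * (if r z = true then (1:ℝ) else 0)) := by
          rw [Finset.sum_add_distrib, Finset.mul_sum]
end

section
/- Instantaneous regret bound for mirror descent: let ψ : Ω → ℝ be differentiable and 1-strongly convex with respect to a norm ‖·‖ on a closed convex set Ω ⊆ ℝⁿ, let x_t ∈ Ω, g_t ∈ ℝⁿ, and x_{t+1} := argmin_{x∈Ω} ⟨g_t, x⟩ + B_ψ(x, x_t) where B_ψ(x,y) := ψ(x) − ψ(y) − ⟨∇ψ(y), x−y⟩. Then for all x* ∈ Ω: ⟨g_t, x_t − x*⟩ ≤ B_ψ(x*, x_t) − B_ψ(x*, x_{t+1}) + (1/2)‖g_t‖²_*, where ‖·‖_* is the dual norm. -/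
/-!
Optimality of `x_{t+1}` against the comparator `x*`, combined with the three-point identity for
the Bregman divergence, gives
`⟪g, x_{t+1} - x*⟫ ≤ B(x*, x_t) - B(x*, x_{t+1}) - B(x_{t+1}, x_t)`.
The remaining term `⟪g, x_t - x_{t+1}⟫` is at most `‖g‖_* ‖x_t - x_{t+1}‖`, and by Young's
inequality at most `‖g‖_*² / 2 + ‖x_{t+1} - x_t‖² / 2`, whose second summand is absorbed by
`B(x_{t+1}, x_t)` through strong convexity.  The only analytic input is that the dual norm is
finite, i.e. that the unit ball of `N` is bounded: `N` is convex, hence continuous in finite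
dimension, so it attains a positive minimum on the Euclidean unit sphere.
-/

open scoped RealInnerProductSpace
open Set Metric

section NormLike

variable {E : Type*} [NormedAddCommGroup E] [NormedSpace ℝ E] {N : E → ℝ}

lemma map_zero_of_homogeneous (hNsmul : ∀ (c : ℝ) x, N (c • x) = |c| * N x) : N 0 = 0 := by
  simpa using hNsmul 0 0

lemma map_sub_comm_of_homogeneous (hNsmul : ∀ (c : ℝ) x, N (c • x) = |c| * N x) (x y : E) :
    N (x - y) = N (y - x) := by
  simpa using hNsmul (-1) (y - x)

lemma convexOn_univ_of_subadditive_of_homogeneous (hNsmul : ∀ (c : ℝ) x, N (c • x) = |c| * N x)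
    (hNtri : ∀ x y, N (x + y) ≤ N x + N y) : ConvexOn ℝ univ N := by
  refine ⟨convex_univ, fun x _ y _ a b ha hb _ => ?_⟩
  calc N (a • x + b • y) ≤ N (a • x) + N (b • y) := hNtri _ _
    _ = a • N x + b • N y := by rw [hNsmul, hNsmul, abs_of_nonneg ha, abs_of_nonneg hb]; rfl

lemma exists_pos_mul_norm_le_of_homogeneous [FiniteDimensional ℝ E]
    (hNsmul : ∀ (c : ℝ) x, N (c • x) = |c| * N x) (hNtri : ∀ x y, N (x + y) ≤ N x + N y)
    (hNdef : ∀ x, x ≠ 0 → 0 < N x) : ∃ c > 0, ∀ x, c * ‖x‖ ≤ N x := by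
  rcases subsingleton_or_nontrivial E with hE | hE
  · refine ⟨1, one_pos, fun x => ?_⟩
    rw [Subsingleton.elim x 0, norm_zero, map_zero_of_homogeneous hNsmul, mul_zero]
  have hcont : Continuous N :=
    (convexOn_univ_of_subadditive_of_homogeneous hNsmul hNtri).locallyLipschitz.continuous
  obtain ⟨z, hz, hzmin⟩ := (isCompact_sphere (0 : E) 1).exists_isMinOn
    (NormedSpace.sphere_nonempty.mpr zero_le_one) hcont.continuousOn
  have hz0 : z ≠ 0 := ne_zero_of_mem_unit_sphere ⟨z, hz⟩
  refine ⟨N z, hNdef z hz0, fun x => ?_⟩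
  rcases eq_or_ne x 0 with rfl | hx0
  · simp [map_zero_of_homogeneous hNsmul]
  have hxpos : 0 < ‖x‖ := norm_pos_iff.mpr hx0
  have hmem : ‖x‖⁻¹ • x ∈ sphere (0 : E) 1 := by
    simp [norm_smul, hxpos.ne']
  have hle : N z ≤ ‖x‖⁻¹ * N x := by
    simpa [hNsmul, abs_of_pos hxpos] using hzmin hmem
  calc N z * ‖x‖ ≤ ‖x‖⁻¹ * N x * ‖x‖ := by gcongr
    _ = N x := by field_simp

end NormLike

section DualNorm

variable {E : Type*} [NormedAddCommGroup E] [InnerProductSpace ℝ E]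

/-- A junk value (`sSup` of an unbounded set) unless the unit ball of `N` is bounded. -/
noncomputable def dualNorm (N : E → ℝ) (g : E) : ℝ :=
  sSup ((fun x => ⟪g, x⟫) '' {x | N x ≤ 1})

lemma bddAbove_inner_image_of_mul_norm_le {N : E → ℝ} {c : ℝ} (hc : 0 < c)
    (hcN : ∀ x, c * ‖x‖ ≤ N x) (g : E) : BddAbove ((fun x => ⟪g, x⟫) '' {x | N x ≤ 1}) := by
  refine ⟨‖g‖ * c⁻¹, ?_⟩
  rintro _ ⟨x, hx, rfl⟩
  have hxle : ‖x‖ ≤ c⁻¹ := by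
    rw [← one_div, le_div_iff₀' hc]
    exact (hcN x).trans hx
  calc ⟪g, x⟫ ≤ ‖g‖ * ‖x‖ := real_inner_le_norm g x
    _ ≤ ‖g‖ * c⁻¹ := by gcongr

lemma inner_le_dualNorm_mul [FiniteDimensional ℝ E] {N : E → ℝ}
    (hNsmul : ∀ (c : ℝ) x, N (c • x) = |c| * N x) (hNtri : ∀ x y, N (x + y) ≤ N x + N y)
    (hNdef : ∀ x, x ≠ 0 → 0 < N x) (g u : E) : ⟪g, u⟫ ≤ dualNorm N g * N u := by
  rcases eq_or_ne u 0 with rfl | hu0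
  · simp [map_zero_of_homogeneous hNsmul]
  have hNu : 0 < N u := hNdef u hu0
  obtain ⟨c, hc, hcN⟩ := exists_pos_mul_norm_le_of_homogeneous hNsmul hNtri hNdef
  have hmem : N ((N u)⁻¹ • u) ≤ 1 := by
    rw [hNsmul, abs_of_pos (inv_pos.mpr hNu), inv_mul_cancel₀ hNu.ne']
  have hle : (N u)⁻¹ * ⟪g, u⟫ ≤ dualNorm N g := by
    rw [← real_inner_smul_right]
    exact le_csSup (bddAbove_inner_image_of_mul_norm_le hc hcN g) ⟨_, hmem, rfl⟩
  calc ⟪g, u⟫ = (N u)⁻¹ * ⟪g, u⟫ * N u := by field_simp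
    _ ≤ dualNorm N g * N u := by gcongr

end DualNorm

section Bregman

variable {E : Type*} [NormedAddCommGroup E] [InnerProductSpace ℝ E]

def bregman (ψ : E → ℝ) (Dψ : E → E) (x y : E) : ℝ :=
  ψ x - ψ y - ⟪Dψ y, x - y⟫

lemma bregman_three_point (ψ : E → ℝ) (Dψ : E → E) (x y z : E) :
    ⟪Dψ x - Dψ y, z - x⟫ = bregman ψ Dψ z y - bregman ψ Dψ z x - bregman ψ Dψ x y := by
  simp only [bregman, inner_sub_left, inner_sub_right]
  ring

/-- One step of mirror descent, with `r` standing for `‖x_{t+1} - x_t‖` and `D` for `‖g‖_*`. -/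
lemma inner_sub_le_bregman_sub_bregman_add_half_sq {ψ : E → ℝ} {Dψ : E → E}
    {g xt xnext xstar : E} {D r : ℝ}
    (hdual : ⟪g, xt - xnext⟫ ≤ D * r) (hstrong : 1 / 2 * r ^ 2 ≤ bregman ψ Dψ xnext xt)
    (hopt : 0 ≤ ⟪g + Dψ xnext - Dψ xt, xstar - xnext⟫) :
    ⟪g, xt - xstar⟫ ≤
      bregman ψ Dψ xstar xt - bregman ψ Dψ xstar xnext + 1 / 2 * D ^ 2 := by
  have hthree := bregman_three_point ψ Dψ xnext xt xstar
  have hyoung : 2 * D * r ≤ D ^ 2 + r ^ 2 := two_mul_le_add_sq D r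
  have hsplit : ⟪g, xt - xstar⟫ = ⟪g, xt - xnext⟫
      - ⟪g + Dψ xnext - Dψ xt, xstar - xnext⟫ + ⟪Dψ xnext - Dψ xt, xstar - xnext⟫ := by
    simp only [inner_sub_left, inner_add_left, inner_sub_right]
    ring
  linarith

end Bregman

theorem mirror_descent_instantaneous_regret_general
    {n : ℕ}
    (Ω : Set (EuclideanSpace ℝ (Fin n)))
    -- `N` is a norm on ℝⁿ and `Nstar` its dual norm
    (N Nstar : EuclideanSpace ℝ (Fin n) → ℝ)
    (hNsmul : ∀ (c : ℝ) x, N (c • x) = |c| * N x)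
    (hNtri : ∀ x y, N (x + y) ≤ N x + N y)
    (hNdef : ∀ x, x ≠ 0 → 0 < N x)
    (hNstar : ∀ g, Nstar g = sSup ((fun x => ⟪g, x⟫) '' {x | N x ≤ 1}))
    -- `ψ` is differentiable with gradient `Dψ`, and `B` is its Bregman divergence
    (ψ : EuclideanSpace ℝ (Fin n) → ℝ) (Dψ : EuclideanSpace ℝ (Fin n) → EuclideanSpace ℝ (Fin n))
    (B : EuclideanSpace ℝ (Fin n) → EuclideanSpace ℝ (Fin n) → ℝ)
    (hB : ∀ x y, B x y = ψ x - ψ y - ⟪Dψ y, x - y⟫)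
    -- 1-strong convexity of `ψ` w.r.t. `N` on `Ω`
    (hstrong : ∀ x ∈ Ω, ∀ y ∈ Ω, B x y ≥ (1 / 2) * (N (x - y)) ^ 2)
    (xt xnext : EuclideanSpace ℝ (Fin n)) (g : EuclideanSpace ℝ (Fin n))
    (hxt : xt ∈ Ω) (hxnext : xnext ∈ Ω)
    -- and satisfies the first-order optimality condition
    (hopt : ∀ x ∈ Ω, 0 ≤ ⟪g + Dψ xnext - Dψ xt, x - xnext⟫) :
    ∀ xstar ∈ Ω,
      ⟪g, xt - xstar⟫ ≤ B xstar xt - B xstar xnext + (1 / 2) * (Nstar g) ^ 2 := by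
  intro xstar hxstar
  obtain rfl : B = bregman ψ Dψ := funext₂ hB
  have hdual : ⟪g, xt - xnext⟫ ≤ Nstar g * N (xnext - xt) := by
    rw [hNstar g, map_sub_comm_of_homogeneous hNsmul]
    exact inner_le_dualNorm_mul hNsmul hNtri hNdef g _
  exact inner_sub_le_bregman_sub_bregman_add_half_sq hdual (hstrong xnext hxnext xt hxt)
    (hopt xstar hxstar)

theorem mirror_descent_instantaneous_regret
    {n : ℕ}
    (Ω : Set (EuclideanSpace ℝ (Fin n))) (hΩconv : Convex ℝ Ω)
    (hΩclosed : IsClosed Ω) (hΩne : Ω.Nonempty)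
    -- `N` is a norm on ℝⁿ and `Nstar` its dual norm
    (N Nstar : EuclideanSpace ℝ (Fin n) → ℝ)
    (hN0 : ∀ x, 0 ≤ N x)
    (hNsmul : ∀ (c : ℝ) x, N (c • x) = |c| * N x)
    (hNtri : ∀ x y, N (x + y) ≤ N x + N y)
    (hNdef : ∀ x, x ≠ 0 → 0 < N x)
    (hNstar : ∀ g, Nstar g = sSup ((fun x => ⟪g, x⟫) '' {x | N x ≤ 1}))
    -- `ψ` is differentiable with gradient `Dψ`, and `B` is its Bregman divergence
    (ψ : EuclideanSpace ℝ (Fin n) → ℝ) (Dψ : EuclideanSpace ℝ (Fin n) → EuclideanSpace ℝ (Fin n))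
    (hψ : ∀ y, HasGradientAt ψ (Dψ y) y)
    (B : EuclideanSpace ℝ (Fin n) → EuclideanSpace ℝ (Fin n) → ℝ)
    (hB : ∀ x y, B x y = ψ x - ψ y - ⟪Dψ y, x - y⟫)
    -- 1-strong convexity of `ψ` w.r.t. `N` on `Ω`
    (hstrong : ∀ x ∈ Ω, ∀ y ∈ Ω, B x y ≥ (1 / 2) * (N (x - y)) ^ 2)
    (xt xnext : EuclideanSpace ℝ (Fin n)) (g : EuclideanSpace ℝ (Fin n))
    (hxt : xt ∈ Ω) (hxnext : xnext ∈ Ω)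
    -- `xnext` minimizes `x ↦ ⟪g, x⟫ + B x xt` over `Ω`,
    (hmin : ∀ x ∈ Ω, ⟪g, xnext⟫ + B xnext xt ≤ ⟪g, x⟫ + B x xt)
    -- and satisfies the first-order optimality condition
    (hopt : ∀ x ∈ Ω, 0 ≤ ⟪g + Dψ xnext - Dψ xt, x - xnext⟫) :
    ∀ xstar ∈ Ω,
      ⟪g, xt - xstar⟫ ≤ B xstar xt - B xstar xnext + (1 / 2) * (Nstar g) ^ 2 :=
  mirror_descent_instantaneous_regret_general Ω N Nstar hNsmul hNtri hNdef hNstar ψ Dψ B hB hstrong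
    xt xnext g hxt hxnext hopt
end
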